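/- Let X be a κ-strongly irreducible subshift of Q^M, let Y be a subshift of Q^M, let Δ be a κ-local map from X to Y, and let F be a finite subset of M such that |Y_{F^{+2κ}}| < |X_F|. Then there are two patterns p and p' in X_{F^{+3κ}} such that p ≠ p', p↾_{∂_{2κ}⁺(F^{+κ})} = p'↾_{∂_{2κ}⁺(F^{+κ})}, and Δ_{F^{+3κ}}^-(p) = Δ_{F^{+3κ}}^-(p'). -/
import Mathlib


open Filter Set

namespace GoE

variable {G M Q : Type*}

/-- A left homogeneous space `⟨M, G, ▷⟩` together with a coordinate system
`⟨m₀, (g_{m₀,m})_{m∈M}⟩`: a cell space with finite stabiliser `G₀` of `m₀`. -/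
structure CellSpace (G M : Type*) [Group G] where
  act : G → M → M
  one_act : ∀ m : M, act 1 m = m
  mul_act : ∀ (g h : G) (m : M), act (g * h) m = act g (act h m)
  transitive : ∀ m m' : M, ∃ g : G, act g m = m'
  m0 : M
  coord : M → G
  coord_act : ∀ m : M, act (coord m) m0 = m
  stab_finite : {g : G | act g m0 = m0}.Finite

variable [Group G]

namespace CellSpace

/-- Membership in the stabiliser `G₀` of `m₀`. -/
def stab (R : CellSpace G M) (g : G) : Prop := R.act g R.m0 = R.m0

/-- The induced right semi-action `m ↝ gG₀ = g_{m₀,m} g ▷ m₀`, on representatives. -/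
def sAct (R : CellSpace G M) (m : M) (g : G) : M := R.act (R.coord m * g) R.m0

/-- `m ↝ ι n` where `ι : M → G/G₀`, `n ↦ G_{m₀,n}` is the canonical identification. -/
def nAct (R : CellSpace G M) (m n : M) : M := R.act (R.coord m * R.coord n) R.m0

/-- `S ⊆ G` represents a finite symmetric right generating set of cosets
(`G₀ · S ⊆ S`, `S⁻¹ ⊆ S`, and `S` generates). -/
structure IsRightGenSet (R : CellSpace G M) (S : Set G) : Prop where
  finite : S.Finite
  saturated : ∀ s ∈ S, ∀ g₀ : G, R.stab g₀ → s * g₀ ∈ S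
  stab_mul : ∀ g₀ : G, R.stab g₀ → ∀ s ∈ S, g₀ * s ∈ S
  symm : ∀ s ∈ S, s⁻¹ ∈ S
  generates : ∀ m : M, ∃ (k : ℕ) (f : ℕ → M), f 0 = R.m0 ∧ f k = m ∧
    ∀ i < k, ∃ s ∈ S, f (i + 1) = R.sAct (f i) s

/-- There is an `S`-path of length `n` from `m` to `m'` in the `S`-Cayley graph. -/
def Chain (R : CellSpace G M) (S : Set G) (m m' : M) (n : ℕ) : Prop :=
  ∃ f : ℕ → M, f 0 = m ∧ f n = m' ∧ ∀ i < n, ∃ s ∈ S, f (i + 1) = R.sAct (f i) s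

/-- The `S`-metric `d`. -/
noncomputable def dist (R : CellSpace G M) (S : Set G) (m m' : M) : ℕ :=
  sInf {n : ℕ | R.Chain S m m' n}

/-- The ball `B(m, ρ)` of radius `ρ` centred at `m`. -/
noncomputable def ball (R : CellSpace G M) (S : Set G) (m : M) (ρ : ℕ) : Set M :=
  {m' : M | R.dist S m m' ≤ ρ}

/-- The `θ`-interior `A^{-θ}` of `A`. -/
noncomputable def inter (R : CellSpace G M) (S : Set G) (A : Set M) (θ : ℕ) : Set M :=
  {m ∈ A | R.ball S m θ ⊆ A}

/-- The `θ`-closure `A^{+θ}` of `A`. -/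
noncomputable def clos (R : CellSpace G M) (S : Set G) (A : Set M) (θ : ℕ) : Set M :=
  {m : M | (R.ball S m θ ∩ A).Nonempty}

/-- The external `θ`-boundary `∂θ⁺A = A^{+θ} ∖ A`. -/
noncomputable def extB (R : CellSpace G M) (S : Set G) (A : Set M) (θ : ℕ) : Set M :=
  R.clos S A θ \ A

/-- The internal `θ`-boundary `∂θ⁻A = A ∖ A^{-θ}`. -/
noncomputable def intB (R : CellSpace G M) (S : Set G) (A : Set M) (θ : ℕ) : Set M :=
  A \ R.inter S A θ

/-- The `θ`-boundary `∂θA = A^{+θ} ∖ A^{-θ}`. -/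
noncomputable def bdry (R : CellSpace G M) (S : Set G) (A : Set M) (θ : ℕ) : Set M :=
  R.clos S A θ \ R.inter S A θ

end CellSpace

/-- The set `X_A` of restrictions to `A` of the elements of `X`. -/
def restr (A : Set M) (X : Set (M → Q)) : Set (A → Q) :=
  (fun x : M → Q => A.restrict x) '' X

/-- The pattern `p` (with domain `A`) semi-occurs in the configuration `c`:
there is `h ∈ H` with `h ⊛ p = c↾_{h ▷ dom p}`. -/
def SemiOccurs (R : CellSpace G M) (H : Subgroup G) {A : Set M} (p : A → Q)
    (c : M → Q) : Prop :=
  ∃ h ∈ H, ∀ a : A, c (R.act h ↑a) = p a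

/-- The pattern `p` (with domain `A`) occurs at `t` in the configuration `c`:
`t ⊛' p = c↾_{t ↝ A}`. -/
def OccursAt (R : CellSpace G M) {A : Set M} (p : A → Q) (t : M) (c : M → Q) : Prop :=
  ∀ a : A, c (R.nAct t ↑a) = p a

/-- The pattern `p` is allowed in `X`: it semi-occurs in some point of `X`. -/
def Allowed (R : CellSpace G M) (H : Subgroup G) (X : Set (M → Q)) {A : Set M}
    (p : A → Q) : Prop :=
  ∃ x ∈ X, SemiOccurs R H p x

/-- The set `⟨𝔉⟩` generated by a set `𝔉` of forbidden patterns. -/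
def Generated (R : CellSpace G M) (H : Subgroup G) (𝔉 : Set (Σ A : Set M, A → Q)) :
    Set (M → Q) :=
  {c : M → Q | ∀ f ∈ 𝔉, ¬ SemiOccurs R H f.2 c}

/-- `X` is a subshift of `Q^M`: it is generated by a set of blocks. -/
def IsSubshift (R : CellSpace G M) (H : Subgroup G) (X : Set (M → Q)) : Prop :=
  ∃ 𝔉 : Set (Σ A : Set M, A → Q), (∀ f ∈ 𝔉, f.1.Finite) ∧ X = Generated R H 𝔉

/-- `X` is a subshift of finite type: it is generated by a finite set of blocks. -/
def IsSubshiftFT (R : CellSpace G M) (H : Subgroup G) (X : Set (M → Q)) : Prop :=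
  ∃ 𝔉 : Set (Σ A : Set M, A → Q), 𝔉.Finite ∧ (∀ f ∈ 𝔉, f.1.Finite) ∧
    X = Generated R H 𝔉

/-- `X` is a `κ`-step subshift: it is generated by a set of `B(κ)`-blocks. -/
def IsStep (R : CellSpace G M) (S : Set G) (H : Subgroup G) (X : Set (M → Q))
    (κ : ℕ) : Prop :=
  ∃ 𝔉 : Set (Σ A : Set M, A → Q), (∀ f ∈ 𝔉, f.1 = R.ball S R.m0 κ) ∧
    X = Generated R H 𝔉

/-- `X` is `κ`-strongly irreducible. -/
def IsStronglyIrr (R : CellSpace G M) (S : Set G) (H : Subgroup G)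
    (X : Set (M → Q)) (κ : ℕ) : Prop :=
  ∀ (A B : Set M), A.Finite → B.Finite → ∀ (p : A → Q) (p' : B → Q),
    Allowed R H X p → Allowed R H X p' →
    (∀ a ∈ A, ∀ b ∈ B, κ + 1 ≤ R.dist S a b) →
    ∃ x ∈ X, A.restrict x = p ∧ B.restrict x = p'

/-- `X` has `ρ`-bounded propagation. -/
def HasBoundedProp (R : CellSpace G M) (S : Set G) (X : Set (M → Q)) (ρ : ℕ) : Prop :=
  ∀ F : Set M, F.Finite → ∀ p : F → Q,
    (∀ f ∈ F, ∃ x ∈ X, ∀ (m : M) (hm : m ∈ R.ball S f ρ ∩ F), p ⟨m, hm.2⟩ = x m) →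
    ∃ x ∈ X, F.restrict x = p

/-- `Δ` is a `κ`-local map from `X` to `Y`. -/
def IsLocalMap (R : CellSpace G M) (S : Set G) (H : Subgroup G)
    (X Y : Set (M → Q)) (Δ : (M → Q) → (M → Q)) (κ : ℕ) : Prop :=
  Set.MapsTo Δ X Y ∧
  ∃ N : Set M, N ⊆ R.ball S R.m0 κ ∧
    (∀ g₀ : G, R.stab g₀ → ∀ n ∈ N, R.act g₀ n ∈ N) ∧
    ∃ δ : (N → Q) → Q,
      (∀ h₀ ∈ H, R.stab h₀ →
        ∀ ℓ ∈ restr N X, ∀ ℓ' : N → Q,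
          (∀ (n : M) (hn : n ∈ N) (hn' : R.act h₀⁻¹ n ∈ N),
            ℓ' ⟨n, hn⟩ = ℓ ⟨R.act h₀⁻¹ n, hn'⟩) →
          δ ℓ' = δ ℓ) ∧
      ∀ x ∈ X, ∀ m : M, Δ x m = δ (fun n : N => x (R.nAct m ↑n))

/-- `Δ` is pre-injective on `X`. -/
def PreInjective (X : Set (M → Q)) (Δ : (M → Q) → (M → Q)) : Prop :=
  ∀ x ∈ X, ∀ x' ∈ X, Δ x = Δ x' → {m : M | x m ≠ x' m}.Finite → x = x'

/-- The cell space `R` is right amenable: there is a finitely additive probability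
measure on the power set of `M` that is semi-invariant under the right semi-action. -/
def RightAmenable (R : CellSpace G M) : Prop :=
  ∃ μ : Set M → ℝ, (∀ A : Set M, 0 ≤ μ A) ∧ μ Set.univ = 1 ∧
    (∀ A B : Set M, Disjoint A B → μ (A ∪ B) = μ A + μ B) ∧
    ∀ (g : G) (A : Set M), Set.InjOn (fun m => R.sAct m g) A →
      μ ((fun m => R.sAct m g) '' A) = μ A

/-- `F` is a right Følner net in `R` (indexed by the directed set `I`). -/
def IsFolnerNet (R : CellSpace G M) (S : Set G) {I : Type*} [Preorder I]
    (F : I → Set M) : Prop :=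
  (∀ i, (F i).Nonempty) ∧ (∀ i, (F i).Finite) ∧
  ∀ ρ : ℕ, Tendsto (fun i => ((R.bdry S (F i) ρ).ncard : ℝ) / ((F i).ncard : ℝ))
    atTop (nhds 0)

/-- The entropy of `X ⊆ Q^M` with respect to the net `F`:
`limsup_i log|X_{F_i}| / |F_i|`. -/
noncomputable def entropy (R : CellSpace G M) (S : Set G) {I : Type*} [Preorder I]
    (F : I → Set M) (X : Set (M → Q)) : ℝ :=
  limsup (fun i => Real.log ((restr (F i) X).ncard : ℝ) / ((F i).ncard : ℝ)) atTop

/-- `T` is a `⟨θ, κ, θ'⟩`-tiling of `R`. -/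
def IsTiling (R : CellSpace G M) (S : Set G) (θ κ θ' : ℕ) (T : Set M) : Prop :=
  (∀ t ∈ T, ∀ t' ∈ T, t ≠ t' →
    ∀ a ∈ R.ball S t θ, ∀ b ∈ R.ball S t' θ, κ + 1 ≤ R.dist S a b) ∧
  ∀ m : M, ∃ t ∈ T, m ∈ R.ball S t θ'

/-- The action `h ⊛ c` of `h ∈ G` on configurations: `(h ⊛ c)(m) = c(h⁻¹ ▷ m)`. -/
def shiftAct (R : CellSpace G M) (h : G) (c : M → Q) : M → Q :=
  fun m => c (R.act h⁻¹ m)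

namespace CellSpace

variable {R : CellSpace G M} {S : Set G}

lemma act_inv_act (g : G) (m : M) : R.act g⁻¹ (R.act g m) = m := by
  rw [← R.mul_act, inv_mul_cancel, R.one_act]

lemma stab_inv {g : G} (h : R.stab g) : R.stab g⁻¹ := by
  unfold stab at h ⊢; nth_rewrite 1 [← h]; exact act_inv_act g R.m0

lemma chain_refl (m : M) : R.Chain S m m 0 :=
  ⟨fun _ => m, rfl, rfl, fun i h => absurd h (Nat.not_lt_zero i)⟩

lemma chain_single {s : G} (hs : s ∈ S) (m : M) : R.Chain S m (R.sAct m s) 1 := by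
  refine ⟨fun i => if i = 0 then m else R.sAct m s, by simp, by simp, ?_⟩
  intro i hi
  interval_cases i
  exact ⟨s, hs, by simp⟩

lemma chain_concat {m m' m'' : M} {a b : ℕ} (h₁ : R.Chain S m m' a)
    (h₂ : R.Chain S m' m'' b) : R.Chain S m m'' (a + b) := by
  obtain ⟨f, hf0, hfa, hfs⟩ := h₁
  obtain ⟨g, hg0, hgb, hgs⟩ := h₂
  refine ⟨fun i => if i < a then f i else g (i - a), ?_, ?_, ?_⟩
  · by_cases h : 0 < a
    · simpa [h] using hf0
    · have ha : a = 0 := by omega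
      simp [ha, hg0, ← hfa, ha, ← hf0]
  · have : ¬ (a + b < a) := by omega
    simp [this, hgb]
  · intro i hi
    by_cases h1 : i + 1 < a
    · obtain ⟨s, hs, hstep⟩ := hfs i (by omega)
      exact ⟨s, hs, by simp [h1, (by omega : i < a), hstep]⟩
    · by_cases h2 : i < a
      · have ha : i + 1 = a := by omega
        obtain ⟨s, hs, hstep⟩ := hfs i (by omega)
        refine ⟨s, hs, ?_⟩
        have e0 : ¬ (i + 1 < a) := by omega
        show (if i + 1 < a then f (i+1) else g (i+1-a)) = R.sAct (if i < a then f i else g (i-a)) s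
        rw [if_neg e0, if_pos h2]
        have e1 : i + 1 - a = 0 := by omega
        rw [e1, hg0, ← hfa, ← ha]
        exact hstep
      · obtain ⟨s, hs, hstep⟩ := hgs (i - a) (by omega)
        refine ⟨s, hs, ?_⟩
        have e1 : ¬ (i + 1 < a) := by omega
        have e2 : i + 1 - a = (i - a) + 1 := by omega
        simp [e1, h2, e2, hstep]

lemma step_reverse (hS : R.IsRightGenSet S) {s : G} (hs : s ∈ S) (m : M) :
    ∃ s' ∈ S, R.sAct (R.sAct m s) s' = m := by
  set m' := R.sAct m s with hm'
  have hg₀ : R.stab ((R.coord m * s)⁻¹ * R.coord m') := by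
    unfold stab
    rw [R.mul_act, R.coord_act, hm']
    exact act_inv_act _ _
  refine ⟨((R.coord m * s)⁻¹ * R.coord m')⁻¹ * s⁻¹,
    hS.stab_mul _ (stab_inv hg₀) _ (hS.symm s hs), ?_⟩
  unfold sAct
  have key : R.coord m' * ((((R.coord m * s)⁻¹ * R.coord m')⁻¹) * s⁻¹) = R.coord m := by
    group
  rw [key, R.coord_act]


lemma chain_tail {m m' : M} {n : ℕ} (h : R.Chain S m m' (n + 1)) :
    ∃ s ∈ S, R.Chain S (R.sAct m s) m' n := by
  obtain ⟨f, hf0, hfn, hfs⟩ := h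
  obtain ⟨s, hs, hstep⟩ := hfs 0 (by omega)
  refine ⟨s, hs, fun i => f (i + 1), by show f (0 + 1) = _; rw [hstep, hf0], hfn, ?_⟩
  intro i hi
  exact hfs (i + 1) (by omega)

lemma chain_symm (hS : R.IsRightGenSet S) {m m' : M} {n : ℕ}
    (h : R.Chain S m m' n) : R.Chain S m' m n := by
  induction n generalizing m with
  | zero =>
    obtain ⟨f, hf0, hfn, -⟩ := h
    rw [← hf0, hfn]; exact chain_refl m'
  | succ n ih =>
    obtain ⟨s, hs, htail⟩ := chain_tail h
    obtain ⟨s', hs', hrev⟩ := step_reverse hS hs m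
    have h1 : R.Chain S m' (R.sAct m s) n := ih htail
    have h2 : R.Chain S (R.sAct m s) m 1 := by
      have := chain_single (R := R) hs' (R.sAct m s)
      rwa [hrev] at this
    exact chain_concat h1 h2

lemma act_sAct (hS : R.IsRightGenSet S) (g : G) {s : G} (hs : s ∈ S) (q : M) :
    ∃ s' ∈ S, R.act g (R.sAct q s) = R.sAct (R.act g q) s' := by
  set g₀ := (R.coord (R.act g q))⁻¹ * (g * R.coord q) with hg₀def
  have hg₀ : R.stab g₀ := by
    unfold stab
    rw [hg₀def, R.mul_act, R.mul_act, R.coord_act]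
    nth_rewrite 2 [← R.coord_act (R.act g q)]
    exact act_inv_act _ _
  refine ⟨g₀ * s, hS.stab_mul _ hg₀ _ hs, ?_⟩
  have key : R.coord (R.act g q) * (g₀ * s) = g * (R.coord q * s) := by
    rw [hg₀def]; group
  unfold sAct
  rw [key]
  simp only [R.mul_act]

lemma act_chain (hS : R.IsRightGenSet S) (g : G) {m m' : M} {n : ℕ}
    (h : R.Chain S m m' n) : R.Chain S (R.act g m) (R.act g m') n := by
  obtain ⟨f, hf0, hfn, hfs⟩ := h
  refine ⟨fun i => R.act g (f i), by show R.act g (f 0) = _; rw [hf0],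
    by show R.act g (f n) = _; rw [hfn], ?_⟩
  intro i hi
  obtain ⟨s, hs, hstep⟩ := hfs i hi
  obtain ⟨s', hs', hact⟩ := act_sAct hS g hs (f i)
  exact ⟨s', hs', by show R.act g (f (i+1)) = _; rw [hstep, hact]⟩

lemma chain_exists (hS : R.IsRightGenSet S) (m m' : M) : ∃ n, R.Chain S m m' n := by
  obtain ⟨k, f, hf0, hfk, hfs⟩ := hS.generates m
  obtain ⟨k', f', hf0', hfk', hfs'⟩ := hS.generates m'
  exact ⟨k + k', chain_concat (chain_symm hS ⟨f, hf0, hfk, hfs⟩) ⟨f', hf0', hfk', hfs'⟩⟩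

lemma dist_le {m m' : M} {n : ℕ} (h : R.Chain S m m' n) : R.dist S m m' ≤ n :=
  Nat.sInf_le h

lemma chain_dist (hS : R.IsRightGenSet S) (m m' : M) :
    R.Chain S m m' (R.dist S m m') :=
  Nat.sInf_mem (chain_exists hS m m')

lemma dist_self (m : M) : R.dist S m m = 0 :=
  Nat.le_zero.mp (dist_le (chain_refl m))

lemma dist_triangle (hS : R.IsRightGenSet S) (m m' m'' : M) :
    R.dist S m m'' ≤ R.dist S m m' + R.dist S m' m'' :=
  dist_le (chain_concat (chain_dist hS m m') (chain_dist hS m' m''))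

lemma dist_symm (hS : R.IsRightGenSet S) (m m' : M) :
    R.dist S m m' = R.dist S m' m :=
  le_antisymm (dist_le (chain_symm hS (chain_dist hS m' m)))
    (dist_le (chain_symm hS (chain_dist hS m m')))

lemma dist_act_le (hS : R.IsRightGenSet S) (g : G) (m m' : M) :
    R.dist S (R.act g m) (R.act g m') ≤ R.dist S m m' :=
  dist_le (act_chain hS g (chain_dist hS m m'))

lemma dist_nAct (hS : R.IsRightGenSet S) (m n : M) :
    R.dist S m (R.nAct m n) ≤ R.dist S R.m0 n := by
  have h1 : R.nAct m n = R.act (R.coord m) n := by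
    unfold nAct
    rw [R.mul_act, R.coord_act]
  have h2 : m = R.act (R.coord m) R.m0 := (R.coord_act m).symm
  calc R.dist S m (R.nAct m n) = R.dist S (R.act (R.coord m) R.m0) (R.act (R.coord m) n) := by
        rw [h1, ← h2]
    _ ≤ R.dist S R.m0 n := dist_act_le hS _ _ _

lemma ball_finite (hS : R.IsRightGenSet S) (m : M) (ρ : ℕ) :
    (R.ball S m ρ).Finite := by
  induction ρ with
  | zero =>
    refine Set.Finite.subset (Set.finite_singleton m) ?_
    intro m' hm'
    have h0 : R.dist S m m' = 0 := Nat.le_zero.mp hm'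
    obtain ⟨f, hf0, hfn, -⟩ := h0 ▸ chain_dist hS m m'
    simp only [Set.mem_singleton_iff]
    rw [← hfn, hf0]
  | succ ρ ih =>
    have hsub : R.ball S m (ρ + 1) ⊆
        R.ball S m ρ ∪ ⋃ m' ∈ R.ball S m ρ, (R.sAct m') '' S := by
      intro m'' hm''
      have hle : R.dist S m m'' ≤ ρ + 1 := hm''
      by_cases hc : R.dist S m m'' ≤ ρ
      · exact Or.inl hc
      · have hd : R.dist S m m'' = ρ + 1 := by omega
        obtain ⟨f, hf0, hfn, hfs⟩ := hd ▸ chain_dist hS m m''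
        have hpre : R.Chain S m (f ρ) ρ := ⟨f, hf0, rfl, fun i hi => hfs i (by omega)⟩
        obtain ⟨s, hs, hstep⟩ := hfs ρ (by omega)
        refine Or.inr (Set.mem_biUnion (dist_le hpre) ?_)
        exact ⟨s, hs, by rw [← hstep, hfn]⟩
    refine Set.Finite.subset (ih.union (ih.biUnion ?_)) hsub
    intro m' _
    exact hS.finite.image _

lemma mem_clos_iff (hS : R.IsRightGenSet S) {F : Set M} {θ : ℕ} {m : M} :
    m ∈ R.clos S F θ ↔ ∃ f ∈ F, R.dist S m f ≤ θ := by
  constructor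
  · rintro ⟨m', hm'b, hm'F⟩
    exact ⟨m', hm'F, hm'b⟩
  · rintro ⟨f, hf, hd⟩
    exact ⟨f, hd, hf⟩

lemma subset_clos (F : Set M) (θ : ℕ) : F ⊆ R.clos S F θ := by
  intro m hm
  exact ⟨m, le_of_eq_of_le (dist_self m) (Nat.zero_le θ), hm⟩

lemma clos_finite (hS : R.IsRightGenSet S) {F : Set M} (hF : F.Finite) (θ : ℕ) :
    (R.clos S F θ).Finite := by
  refine Set.Finite.subset (hF.biUnion (fun f _ => ball_finite hS f θ)) ?_
  intro m hm
  obtain ⟨f, hf, hd⟩ := (mem_clos_iff hS).mp hm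
  exact Set.mem_biUnion hf (by rw [ball, Set.mem_setOf_eq, ← dist_symm hS]; exact hd)

end CellSpace

theorem stmt14
    [Finite Q] (R : CellSpace G M) (S : Set G) (hS : R.IsRightGenSet S)
    (H : Subgroup G) (hH : ∀ m : M, R.coord m ∈ H)
    (X : Set (M → Q)) (hX : IsSubshift R H X)
    (κ : ℕ) (hsi : IsStronglyIrr R S H X κ)
    (Y : Set (M → Q)) (hY : IsSubshift R H Y)
    (Δ : (M → Q) → (M → Q)) (hΔ : IsLocalMap R S H X Y Δ κ)
    (F : Set M) (hF : F.Finite)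
    (hcard : (restr (R.clos S F (2 * κ)) Y).ncard < (restr F X).ncard) :
    ∃ p ∈ restr (R.clos S F (3 * κ)) X, ∃ p' ∈ restr (R.clos S F (3 * κ)) X,
      p ≠ p' ∧
      (∀ (m : M) (hm3 : m ∈ R.clos S F (3 * κ)),
        m ∈ R.clos S (R.clos S F κ) (2 * κ) → m ∉ R.clos S F κ →
        p ⟨m, hm3⟩ = p' ⟨m, hm3⟩) ∧
      ∀ c ∈ X, ∀ c' ∈ X,
        Set.restrict (R.clos S F (3 * κ)) c = p →
        Set.restrict (R.clos S F (3 * κ)) c' = p' →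
        ∀ m ∈ R.inter S (R.clos S F (3 * κ)) κ, Δ c m = Δ c' m := by
  classical
  obtain ⟨hMaps, N, hN, hNstab, δ, hδinv, hδ⟩ := hΔ
  haveI hFsub : Finite ↥F := hF.to_subtype
  have hXF_fin : (restr F X).Finite := Set.toFinite _
  have hclos2_fin : (R.clos S F (2 * κ)).Finite := CellSpace.clos_finite hS hF (2 * κ)
  have hclos3_fin : (R.clos S F (3 * κ)).Finite := CellSpace.clos_finite hS hF (3 * κ)
  haveI := hclos2_fin.to_subtype
  have hT_fin : (restr (R.clos S F (2 * κ)) Y).Finite := Set.toFinite _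
  have hXF_ne : (restr F X).Nonempty := Set.nonempty_of_ncard_ne_zero (by omega)
  obtain ⟨py, y, hy, hyr⟩ := hXF_ne
  clear hyr py
  set A := R.clos S F (3 * κ) \ R.clos S F κ with hA
  have hA_fin : A.Finite := hclos3_fin.subset Set.diff_subset
  have hdistFA : ∀ a ∈ F, ∀ b ∈ A, κ + 1 ≤ R.dist S a b := by
    intro a ha b hb
    by_contra hlt
    have hd : R.dist S b a ≤ κ := by rw [CellSpace.dist_symm hS]; omega
    exact hb.2 ⟨a, hd, ha⟩
  have hallow : ∀ (B : Set M) (z : M → Q), z ∈ X → Allowed R H X (B.restrict z) :=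
    fun B z hz => ⟨z, hz, 1, one_mem H, fun a => by rw [R.one_act]; rfl⟩
  have key : ∀ p ∈ restr F X,
      ∃ x, x ∈ X ∧ F.restrict x = p ∧ A.restrict x = A.restrict y := by
    rintro p ⟨x₀, hx₀, rfl⟩
    obtain ⟨x, hx, h1, h2⟩ := hsi F A hF hA_fin (F.restrict x₀) (A.restrict y)
      (hallow F x₀ hx₀) (hallow A y hy) hdistFA
    exact ⟨x, hx, h1, h2⟩
  haveI : Nonempty (M → Q) := ⟨y⟩
  choose! ch hmemX hresF hresA using key
  haveI := hXF_fin.to_subtype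
  haveI := hT_fin.to_subtype
  set ψ : ↥(restr F X) → ↥(restr (R.clos S F (2 * κ)) Y) :=
    fun p => ⟨(R.clos S F (2 * κ)).restrict (Δ (ch ↑p)),
      ⟨Δ (ch ↑p), hMaps (hmemX ↑p p.2), rfl⟩⟩ with hψdef
  have hninj : ¬ Function.Injective ψ := by
    intro hinj
    have hle := Nat.card_le_card_of_injective ψ hinj
    rw [Nat.card_coe_set_eq, Nat.card_coe_set_eq] at hle
    omega
  rw [Function.not_injective_iff] at hninj
  obtain ⟨a, b, hψeq, hne⟩ := hninj
  set x := ch ↑a with hxdef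
  set x' := ch ↑b with hx'def
  have hxX : x ∈ X := hmemX ↑a a.2
  have hx'X : x' ∈ X := hmemX ↑b b.2
  have hFsub3 : F ⊆ R.clos S F (3 * κ) := CellSpace.subset_clos F (3 * κ)
  refine ⟨(R.clos S F (3 * κ)).restrict x, ⟨x, hxX, rfl⟩,
    (R.clos S F (3 * κ)).restrict x', ⟨x', hx'X, rfl⟩, ?_, ?_, ?_⟩
  · intro hpp
    apply hne
    apply Subtype.ext
    funext mF
    calc (↑a : ↥F → Q) mF = x ↑mF := by rw [← hresF ↑a a.2]; rfl
      _ = x' ↑mF := congrFun hpp ⟨↑mF, hFsub3 mF.2⟩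
      _ = (↑b : ↥F → Q) mF := by rw [← hresF ↑b b.2]; rfl
  · intro m hm3 _ hmnotκ
    have hmA : m ∈ A := ⟨hm3, hmnotκ⟩
    show x m = x' m
    have e1 : x m = y m := congrFun (hresA ↑a a.2) ⟨m, hmA⟩
    have e2 : x' m = y m := congrFun (hresA ↑b b.2) ⟨m, hmA⟩
    rw [e1, e2]
  · intro c hc c' hc' hcr hc'r m hm
    obtain ⟨hm3, hmball⟩ := hm
    have hnball : ∀ n : ↥N, R.nAct m ↑n ∈ R.ball S m κ := by
      intro n
      exact le_trans (CellSpace.dist_nAct hS m ↑n) (hN n.2)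
    have hDeq : ∀ z, z ∈ X → ∀ z', z' ∈ X →
        (∀ m' ∈ R.ball S m κ, z m' = z' m') → Δ z m = Δ z' m := by
      intro z hz z' hz' hagree
      rw [hδ z hz m, hδ z' hz' m]
      congr 1
      funext n
      exact hagree _ (hnball n)
    have hcx : ∀ m' ∈ R.ball S m κ, c m' = x m' := by
      intro m' h
      exact congrFun hcr ⟨m', hmball h⟩
    have hc'x : ∀ m' ∈ R.ball S m κ, c' m' = x' m' := by
      intro m' h
      exact congrFun hc'r ⟨m', hmball h⟩
    by_cases hm2 : m ∈ R.clos S F (2 * κ)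
    · have e1 : Δ c m = Δ x m := hDeq c hc x hxX hcx
      have e2 : Δ c' m = Δ x' m := hDeq c' hc' x' hx'X hc'x
      have e3 : Δ x m = Δ x' m := congrFun (congrArg Subtype.val hψeq) ⟨m, hm2⟩
      rw [e1, e2, e3]
    · have hannulus : ∀ m' ∈ R.ball S m κ, m' ∉ R.clos S F κ := by
        intro m' h hcl
        obtain ⟨f, hf, hdf⟩ := (CellSpace.mem_clos_iff hS).mp hcl
        apply hm2
        refine (CellSpace.mem_clos_iff hS).mpr ⟨f, hf, ?_⟩
        calc R.dist S m f ≤ R.dist S m m' + R.dist S m' f :=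
              CellSpace.dist_triangle hS _ _ _
          _ ≤ κ + κ := add_le_add h hdf
          _ ≤ 2 * κ := by omega
      refine hDeq c hc c' hc' ?_
      intro m' h
      have hm'A : m' ∈ A := ⟨hmball h, hannulus m' h⟩
      rw [hcx m' h, hc'x m' h]
      have e1 : x m' = y m' := congrFun (hresA ↑a a.2) ⟨m', hm'A⟩
      have e2 : x' m' = y m' := congrFun (hresA ↑b b.2) ⟨m', hm'A⟩
      rw [e1, e2]

end GoE
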